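/- Let F: ℝⁿ → ℝ be twice differentiable with L_H-Lipschitz Hessian, let x_k ∈ ℝⁿ with g_k = ∇F(x_k), H_k = ∇²F(x_k), and let ĝ_k, Ĥ_k be approximations. Suppose d_k satisfies (Ĥ_k + λ_k I) d_k = -ĝ'_k with λ_k ≥ 0, ĝ'_k satisfying ‖ĝ_k - ĝ'_k‖ ≤ ε_eig, and let x_{k+1} = x_k + d_k. Then ‖∇F(x_{k+1})‖ ≤ ((L_H + 1)/2)‖d_k‖² + λ_k‖d_k‖ + ε_eig + ‖g_k - ĝ_k‖ + (1/2)‖Ĥ_k - H_k‖². -/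

import Mathlib

/-!
With `G = ∇F` and `H = ∇²F(xₖ)`, split `G (xₖ + d)` into the Taylor remainder
`G (xₖ + d) - G xₖ - H d` (at most `L_H/2 ‖d‖²`), the errors `G xₖ - ĝ` and `ĝ - ĝ'`, the model
residual `ĝ' + Ĥ d`, which the regularized Newton equation makes equal to `-λ d`, and `(H - Ĥ) d`,
whose norm `≤ ‖Ĥ - H‖ ‖d‖` is split by AM-GM. The triangle inequality then gives the bound.
-/

open InnerProductSpace

/-- Along the segment, `t ↦ G (x + t • d) - G x - t • G'(x) d` has derivative of norm `≤ L t ‖d‖²`,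
which integrates to the `L / 2` constant. -/
theorem norm_sub_sub_fderiv_le_of_lipschitz_fderiv {E F : Type*} [NormedAddCommGroup E]
    [NormedSpace ℝ E] [NormedAddCommGroup F] [NormedSpace ℝ F] {G : E → F} {L : ℝ}
    (hG : Differentiable ℝ G)
    (hLip : ∀ x y : E, ‖fderiv ℝ G x - fderiv ℝ G y‖ ≤ L * ‖x - y‖) (x d : E) :
    ‖G (x + d) - G x - fderiv ℝ G x d‖ ≤ L / 2 * ‖d‖ ^ 2 := by
  set r : ℝ → F := fun t => G (x + t • d) - G x - t • fderiv ℝ G x d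
  have hr : ∀ t, HasDerivAt r (fderiv ℝ G (x + t • d) d - fderiv ℝ G x d) t := by
    intro t
    have hline : HasDerivAt (fun t : ℝ => x + t • d) d t := by
      simpa using ((hasDerivAt_id t).smul_const d).const_add x
    exact (((hG _).hasFDerivAt.comp_hasDerivAt t hline).sub_const (G x)).sub
      (by simpa using (hasDerivAt_id t).smul_const (fderiv ℝ G x d))
  have hB : ∀ t, HasDerivAt (fun t : ℝ => L * ‖d‖ ^ 2 / 2 * t ^ 2) (L * ‖d‖ ^ 2 * t) t :=
    fun t => ((hasDerivAt_pow 2 t).const_mul _).congr_deriv (by push_cast; ring)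
  have hbound : ∀ t ∈ Set.Ico (0 : ℝ) 1,
      ‖fderiv ℝ G (x + t • d) d - fderiv ℝ G x d‖ ≤ L * ‖d‖ ^ 2 * t := by
    intro t ht
    calc ‖fderiv ℝ G (x + t • d) d - fderiv ℝ G x d‖
        ≤ ‖fderiv ℝ G (x + t • d) - fderiv ℝ G x‖ * ‖d‖ :=
          (fderiv ℝ G (x + t • d) - fderiv ℝ G x).le_opNorm d
      _ ≤ L * ‖(x + t • d) - x‖ * ‖d‖ := by gcongr; exact hLip _ _
      _ = L * ‖d‖ ^ 2 * t := by
          rw [add_sub_cancel_left, norm_smul, Real.norm_of_nonneg ht.1]; ring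
  have key := image_norm_le_of_norm_deriv_right_le_deriv_boundary
    (fun t _ => (hr t).continuousAt.continuousWithinAt) (fun t _ => (hr t).hasDerivWithinAt)
    (by simp [r]) hB hbound (Set.right_mem_Icc.2 zero_le_one)
  simp only [r, one_smul, one_pow, mul_one] at key
  linarith

theorem ContinuousLinearMap.norm_apply_le_half_sq_add_half_sq
    {E F : Type*} [SeminormedAddCommGroup E] [SeminormedAddCommGroup F]
    [NormedSpace ℝ E] [NormedSpace ℝ F] (A : E →L[ℝ] F) (d : E) :
    ‖A d‖ ≤ 1 / 2 * ‖d‖ ^ 2 + 1 / 2 * ‖A‖ ^ 2 := by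
  nlinarith [A.le_opNorm d, two_mul_le_add_sq ‖A‖ ‖d‖]

theorem ContDiff.differentiable_gradient {E : Type*} [NormedAddCommGroup E]
    [InnerProductSpace ℝ E] [CompleteSpace E] {F : E → ℝ} (hF : ContDiff ℝ 2 F) :
    Differentiable ℝ (gradient F) :=
  (toDual ℝ E).symm.differentiable.comp (hF.fderiv_right (by norm_num)).differentiable_one

theorem norm_apply_add_le_of_regularized_newton_step {E : Type*} [NormedAddCommGroup E]
    [NormedSpace ℝ E] {G : E → E} {L : ℝ} (hG : Differentiable ℝ G)
    (hLip : ∀ x y : E, ‖fderiv ℝ G x - fderiv ℝ G y‖ ≤ L * ‖x - y‖)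
    (x d ĝ g' : E) (Ĥ : E →L[ℝ] E) {μ : ℝ} (hμ : 0 ≤ μ) (hd : Ĥ d + μ • d = -g') :
    ‖G (x + d)‖ ≤ (L + 1) / 2 * ‖d‖ ^ 2 + μ * ‖d‖ + ‖ĝ - g'‖ + ‖G x - ĝ‖
      + 1 / 2 * ‖Ĥ - fderiv ℝ G x‖ ^ 2 := by
  set H := fderiv ℝ G x
  have hresidual : ‖g' + Ĥ d‖ = μ * ‖d‖ := by
    rw [show g' + Ĥ d = -(μ • d) by
      rw [eq_neg_iff_add_eq_zero, add_assoc, add_comm, hd, neg_add_cancel], norm_neg, norm_smul,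
      Real.norm_of_nonneg hμ]
  have htaylor := norm_sub_sub_fderiv_le_of_lipschitz_fderiv hG hLip x d
  have hhess : ‖H d - Ĥ d‖ ≤ 1 / 2 * ‖d‖ ^ 2 + 1 / 2 * ‖Ĥ - H‖ ^ 2 := by
    rw [norm_sub_rev]
    exact (Ĥ - H).norm_apply_le_half_sq_add_half_sq d
  calc ‖G (x + d)‖
      = ‖(G (x + d) - G x - H d) + (G x - ĝ) + (ĝ - g') + (g' + Ĥ d) + (H d - Ĥ d)‖ := by
        congr 1; abel
    _ ≤ ‖G (x + d) - G x - H d‖ + ‖G x - ĝ‖ + ‖ĝ - g'‖ + ‖g' + Ĥ d‖ + ‖H d - Ĥ d‖ :=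
        (norm_add_le _ _).trans (add_le_add_left norm_add₄_le _)
    _ ≤ (L + 1) / 2 * ‖d‖ ^ 2 + μ * ‖d‖ + ‖ĝ - g'‖ + ‖G x - ĝ‖
      + 1 / 2 * ‖Ĥ - H‖ ^ 2 := by linarith

/-- gradient bound of the descent lemma for SHSODM. -/
theorem stmt_16 {n : ℕ} (F : EuclideanSpace ℝ (Fin n) → ℝ) (LH : ℝ)
    (hF : ContDiff ℝ 2 F)
    (hLip : ∀ x y : EuclideanSpace ℝ (Fin n),
      ‖fderiv ℝ (gradient F) x - fderiv ℝ (gradient F) y‖ ≤ LH * ‖x - y‖)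
    (xk d ghat g' : EuclideanSpace ℝ (Fin n))
    (Hhat : EuclideanSpace ℝ (Fin n) →L[ℝ] EuclideanSpace ℝ (Fin n))
    (lam : ℝ) (hlam : 0 ≤ lam) (εeig : ℝ) (hper : ‖ghat - g'‖ ≤ εeig)
    (hd : Hhat d + lam • d = -g') :
    ‖gradient F (xk + d)‖
      ≤ ((LH + 1) / 2) * ‖d‖ ^ 2 + lam * ‖d‖ + εeig
        + ‖gradient F xk - ghat‖
        + (1 / 2) * ‖Hhat - fderiv ℝ (gradient F) xk‖ ^ 2 := by
  have := norm_apply_add_le_of_regularized_newton_step hF.differentiable_gradient hLip xk d ghat g'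
    Hhat hlam hd
  linarith
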